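/- Let p be a polynomial and f a polynomial vector field on ℝ^n. For every x₀ ∈ ℝ^n, exactly one of the following holds: x₀ ∈ In_f(S(p ≥ 0)) or x₀ ∈ Out_f(S(p ≥ 0)), where S(p ≥ 0) = {x : p(x) ≥ 0}; the same dichotomy holds for S(p > 0). -/

import Mathlib

/-- `φ` is a global flow of the polynomial vector field `f`. -/
def IsPolyFlow {n : ℕ} (f : Fin n → MvPolynomial (Fin n) ℝ)
    (φ : (Fin n → ℝ) → ℝ → (Fin n → ℝ)) : Prop :=
  (∀ x₀, φ x₀ 0 = x₀) ∧
    ∀ x₀ t (i : Fin n),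
      HasDerivAt (fun s => φ x₀ s i) (MvPolynomial.eval (φ x₀ t) (f i)) t

/-- `In_f(A)`: points whose forward trajectory enters `A` immediately. -/
def InSet {n : ℕ} (φ : (Fin n → ℝ) → ℝ → (Fin n → ℝ)) (A : Set (Fin n → ℝ)) :
    Set (Fin n → ℝ) :=
  {x₀ | ∃ ε > 0, ∀ t ∈ Set.Ioo (0:ℝ) ε, φ x₀ t ∈ A}

/-- `Out_f(A)`: points whose forward trajectory leaves `A` immediately. -/
def OutSet {n : ℕ} (φ : (Fin n → ℝ) → ℝ → (Fin n → ℝ)) (A : Set (Fin n → ℝ)) :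
    Set (Fin n → ℝ) :=
  {x₀ | ∃ ε > 0, ∀ t ∈ Set.Ioo (0:ℝ) ε, φ x₀ t ∉ A}

/-!
Along a trajectory `x(t)` of `ẋ = f(x)`, the derivative of `q(x(t))` is `(L_f q)(x(t))`, where
`L_f q = ∑ i, f i * ∂q/∂xᵢ` is the Lie derivative. If some iterate `L_fᵏ p` does not vanish at
`x₀`, the first such one fixes the sign of `p(x(t))` for small `t > 0`. If all of them vanish,
Hilbert's basis theorem puts every `L_fᵐ p` in the ideal generated by `p, …, L_fᴺ⁻¹ p`, so the
vector `(L_fʲ p(x(t)))_{j<N}` solves a linear ODE with continuous coefficients and zero initial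
value; by Grönwall it vanishes, and `p(x(t)) = 0` for `t ≥ 0`. This replaces the analyticity of
`t ↦ p(x(t))`. In each of the three cases the trajectory immediately enters or leaves both
`{p ≥ 0}` and `{p > 0}`.
-/

open MvPolynomial Set Filter Topology

theorem exists_forall_mem_span_range_fin {R : Type*} [CommRing R] [IsNoetherianRing R]
    (g : ℕ → R) : ∃ N, ∀ m, g m ∈ Ideal.span (range fun i : Fin N => g i) := by
  have hmono : Monotone fun N => Ideal.span (range fun i : Fin N => g i) := by
    refine fun a b hab => Ideal.span_mono ?_
    rintro _ ⟨i, rfl⟩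
    exact ⟨Fin.castLE hab i, rfl⟩
  obtain ⟨N, hN⟩ := monotone_stabilizes_iff_noetherian.mpr inferInstance ⟨_, hmono⟩
  refine ⟨N, fun m => ?_⟩
  have hstab : Ideal.span (range fun i : Fin N => g i) =
      Ideal.span (range fun i : Fin (max N (m + 1)) => g i) := hN _ (le_max_left _ _)
  rw [hstab]
  exact Ideal.subset_span ⟨⟨m, by omega⟩, rfl⟩

theorem eqOn_zero_of_hasDerivAt_linear {ι : Type*} [Fintype ι] {h : ℝ → ι → ℝ}
    {c : ι → ι → ℝ → ℝ} (hc : ∀ j i, Continuous (c j i))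
    (hh : ∀ t, HasDerivAt h (fun j => ∑ i, c j i t * h t i) t) (h0 : h 0 = 0) :
    EqOn h 0 (Ici 0) := by
  intro T hT
  have hcont : ContinuousOn (fun t => ∑ j, ∑ i, |c j i t|) (Icc 0 T) := by fun_prop
  obtain ⟨K, hK⟩ := isCompact_Icc.exists_bound_of_continuousOn hcont
  have hbound : ∀ t ∈ Ico 0 T, ‖fun j => ∑ i, c j i t * h t i‖ ≤ K * ‖h t‖ + 0 := by
    intro t ht
    have hsum : ∑ j, ∑ i, |c j i t| ≤ K := (le_abs_self _).trans (hK t (Ico_subset_Icc_self ht))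
    rw [add_zero]
    refine pi_norm_le_iff_of_nonneg
      (mul_nonneg ((by positivity : (0:ℝ) ≤ _).trans hsum) (norm_nonneg _)) |>.2 fun j => ?_
    calc ‖∑ i, c j i t * h t i‖ ≤ ∑ i, |c j i t| * ‖h t‖ := by
          refine (norm_sum_le _ _).trans (Finset.sum_le_sum fun i _ => ?_)
          rw [norm_mul, Real.norm_eq_abs]
          gcongr
          exact norm_le_pi_norm _ i
      _ = (∑ i, |c j i t|) * ‖h t‖ := Finset.sum_mul .. |>.symm
      _ ≤ (∑ j, ∑ i, |c j i t|) * ‖h t‖ :=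
          mul_le_mul_of_nonneg_right (Finset.single_le_sum (f := fun j => ∑ i, |c j i t|)
            (fun j _ => by positivity) (Finset.mem_univ j)) (norm_nonneg _)
      _ ≤ K * ‖h t‖ := by gcongr
  have := norm_le_gronwallBound_of_norm_deriv_right_le (δ := 0)
    (fun t _ => (hh t).continuousAt.continuousWithinAt) (fun t _ => (hh t).hasDerivWithinAt)
    (by simp [h0]) hbound T ⟨hT, le_rfl⟩
  simpa [gronwallBound_ε0_δ0] using this

theorem eventually_nhdsGT_pos_of_hasDerivAt {g g' : ℝ → ℝ} {a : ℝ}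
    (hg : ∀ t, HasDerivAt g (g' t) t) (ha : g a = 0) (hg' : ∀ᶠ t in 𝓝[>] a, 0 < g' t) :
    ∀ᶠ t in 𝓝[>] a, 0 < g t := by
  obtain ⟨b, hab, hb⟩ := mem_nhdsGT_iff_exists_Ioo_subset.1 hg'
  have hmono : StrictMonoOn g (Icc a b) := by
    refine strictMonoOn_of_deriv_pos (convex_Icc a b)
      (HasDerivAt.continuousOn fun t _ => hg t) fun t ht => ?_
    rw [interior_Icc] at ht
    exact (hg t).deriv ▸ hb ht
  refine mem_nhdsGT_iff_exists_Ioo_subset.2 ⟨b, hab, fun t ht => ?_⟩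
  simpa [ha] using hmono (left_mem_Icc.2 (le_of_lt hab)) (Ioo_subset_Icc_self ht) ht.1

variable {σ : Type*} [Fintype σ]

noncomputable def lieDeriv (f : σ → MvPolynomial σ ℝ) :
    Derivation ℝ (MvPolynomial σ ℝ) (MvPolynomial σ ℝ) :=
  ∑ i, f i • pderiv i

theorem lieDeriv_X (f : σ → MvPolynomial σ ℝ) (j : σ) : lieDeriv f (X j) = f j := by
  classical
  rw [lieDeriv, ← Derivation.coeFnAddMonoidHom_apply, map_sum]
  simp [Derivation.coeFnAddMonoidHom_apply, Pi.single_apply]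

def IsPolyIntegralCurve (f : σ → MvPolynomial σ ℝ) (γ : ℝ → σ → ℝ) : Prop :=
  ∀ t, HasDerivAt γ (fun i => eval (γ t) (f i)) t

theorem IsPolyFlow.isPolyIntegralCurve {n : ℕ} {f : Fin n → MvPolynomial (Fin n) ℝ}
    {φ : (Fin n → ℝ) → ℝ → (Fin n → ℝ)} (hφ : IsPolyFlow f φ) (x₀ : Fin n → ℝ) :
    IsPolyIntegralCurve f (φ x₀) :=
  fun t => hasDerivAt_pi.2 (hφ.2 x₀ t)

namespace IsPolyIntegralCurve

variable {f : σ → MvPolynomial σ ℝ} {γ : ℝ → σ → ℝ}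

theorem hasDerivAt_eval (hγ : IsPolyIntegralCurve f γ) (q : MvPolynomial σ ℝ) (t : ℝ) :
    HasDerivAt (fun s => eval (γ s) q) (eval (γ t) (lieDeriv f q)) t := by
  induction q using MvPolynomial.induction_on with
  | C a => simpa using hasDerivAt_const t a
  | add q r hq hr => simpa [Pi.add_def] using hq.add hr
  | mul_X q j hq =>
    have hj : HasDerivAt (fun s => γ s j) (eval (γ t) (f j)) t := hasDerivAt_pi.1 (hγ t) j
    simpa [Derivation.leibniz, lieDeriv_X, Pi.mul_def, add_comm, mul_comm] using hq.mul hj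

theorem continuous_eval (hγ : IsPolyIntegralCurve f γ) (q : MvPolynomial σ ℝ) :
    Continuous fun s => eval (γ s) q :=
  continuous_iff_continuousAt.2 fun t => (hγ.hasDerivAt_eval q t).continuousAt

theorem eventually_pos_of_iterate_lieDeriv (hγ : IsPolyIntegralCurve f γ) (k : ℕ)
    (q : MvPolynomial σ ℝ) (hzero : ∀ j < k, eval (γ 0) ((lieDeriv f)^[j] q) = 0)
    (hpos : 0 < eval (γ 0) ((lieDeriv f)^[k] q)) :
    ∀ᶠ t in 𝓝[>] 0, 0 < eval (γ t) q := by
  induction k generalizing q with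
  | zero =>
    rw [Function.iterate_zero_apply] at hpos
    exact nhdsWithin_le_nhds (continuousAt_const.eventually_lt
      (hγ.continuous_eval q).continuousAt hpos)
  | succ k ih =>
    refine eventually_nhdsGT_pos_of_hasDerivAt (hγ.hasDerivAt_eval q) (hzero 0 k.succ_pos) ?_
    exact ih (lieDeriv f q) (fun j hj => hzero (j + 1) (by omega)) hpos

theorem eqOn_zero_of_iterate_lieDeriv (hγ : IsPolyIntegralCurve f γ) (q : MvPolynomial σ ℝ)
    (hzero : ∀ k, eval (γ 0) ((lieDeriv f)^[k] q) = 0) :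
    EqOn (fun t => eval (γ t) q) 0 (Ici 0) := by
  obtain ⟨N, hN⟩ := exists_forall_mem_span_range_fin fun k => (lieDeriv f)^[k] q
  choose a ha using fun m => (Submodule.mem_span_range_iff_exists_fun _).1 (hN m)
  set h : ℝ → Fin N → ℝ := fun t j => eval (γ t) ((lieDeriv f)^[(j : ℕ)] q)
  have hcomb : ∀ m t, eval (γ t) ((lieDeriv f)^[m] q) = ∑ i, eval (γ t) (a m i) * h t i := by
    intro m t
    simp [h, ← ha m]
  have hderiv :
      ∀ t, HasDerivAt h (fun j : Fin N => ∑ i, eval (γ t) (a (j + 1) i) * h t i) t := by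
    refine fun t => hasDerivAt_pi.2 fun j => ?_
    simpa [← hcomb, ← Function.iterate_succ_apply'] using
      hγ.hasDerivAt_eval ((lieDeriv f)^[j] q) t
  have hvanish := eqOn_zero_of_hasDerivAt_linear
    (fun (j : Fin N) i => hγ.continuous_eval (a (j + 1) i)) hderiv
    (funext fun j : Fin N => hzero j)
  intro t ht
  -- `q = L⁰ q` is itself a combination of the components of `h`; this also covers `N = 0`.
  simpa [hvanish ht] using hcomb 0 t

theorem eventually_sign_trichotomy (hγ : IsPolyIntegralCurve f γ) (q : MvPolynomial σ ℝ) :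
    (∀ᶠ t in 𝓝[>] 0, 0 < eval (γ t) q) ∨ (∀ᶠ t in 𝓝[>] 0, eval (γ t) q = 0) ∨
      ∀ᶠ t in 𝓝[>] 0, eval (γ t) q < 0 := by
  classical
  by_cases hall : ∃ k, eval (γ 0) ((lieDeriv f)^[k] q) ≠ 0
  swap
  · simp only [not_exists, not_not] at hall
    exact .inr (.inl (eventually_nhdsWithin_of_forall fun t ht =>
      hγ.eqOn_zero_of_iterate_lieDeriv q hall (le_of_lt ht : (0 : ℝ) ≤ t)))
  have hmin : ∀ j < Nat.find hall, eval (γ 0) ((lieDeriv f)^[j] q) = 0 :=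
    fun j hj => not_not.1 (Nat.find_min hall hj)
  rcases (Nat.find_spec hall).lt_or_gt with hneg | hpos
  · refine .inr (.inr ?_)
    have := hγ.eventually_pos_of_iterate_lieDeriv _ (-q)
      (fun j hj => by simp [iterate_map_neg, hmin j hj]) (by simpa [iterate_map_neg] using hneg)
    simpa using this
  · exact .inl (hγ.eventually_pos_of_iterate_lieDeriv _ q hmin hpos)

end IsPolyIntegralCurve

theorem mem_inSet_iff {n : ℕ} {φ : (Fin n → ℝ) → ℝ → (Fin n → ℝ)} {A : Set (Fin n → ℝ)}
    {x₀ : Fin n → ℝ} : x₀ ∈ InSet φ A ↔ ∀ᶠ t in 𝓝[>] 0, φ x₀ t ∈ A := by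
  simp [InSet, Filter.Eventually, mem_nhdsGT_iff_exists_Ioo_subset, subset_def]

theorem mem_outSet_iff {n : ℕ} {φ : (Fin n → ℝ) → ℝ → (Fin n → ℝ)} {A : Set (Fin n → ℝ)}
    {x₀ : Fin n → ℝ} : x₀ ∈ OutSet φ A ↔ ∀ᶠ t in 𝓝[>] 0, φ x₀ t ∉ A :=
  mem_inSet_iff (A := Aᶜ)

theorem xor_mem_inSet_mem_outSet_iff {n : ℕ} {φ : (Fin n → ℝ) → ℝ → (Fin n → ℝ)}
    {A : Set (Fin n → ℝ)} {x₀ : Fin n → ℝ} :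
    Xor (x₀ ∈ InSet φ A) (x₀ ∈ OutSet φ A) ↔ x₀ ∈ InSet φ A ∨ x₀ ∈ OutSet φ A := by
  rw [xor_iff_or_and_not_and, and_iff_left_iff_imp]
  rintro - ⟨hin, hout⟩
  obtain ⟨t, hA, hnA⟩ := ((mem_inSet_iff.1 hin).and (mem_outSet_iff.1 hout)).exists
  exact hnA hA

/-- **In/Out dichotomy**: for a polynomial vector field, every point either enters
`{p ≥ 0}` immediately or leaves it immediately, and likewise for `{p > 0}`. -/
theorem in_out_dichotomy
    {n : ℕ} (f : Fin n → MvPolynomial (Fin n) ℝ) (p : MvPolynomial (Fin n) ℝ)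
    (φ : (Fin n → ℝ) → ℝ → (Fin n → ℝ)) (hφ : IsPolyFlow f φ)
    (x₀ : Fin n → ℝ) :
    Xor' (x₀ ∈ InSet φ {x | 0 ≤ MvPolynomial.eval x p})
         (x₀ ∈ OutSet φ {x | 0 ≤ MvPolynomial.eval x p}) ∧
    Xor' (x₀ ∈ InSet φ {x | 0 < MvPolynomial.eval x p})
         (x₀ ∈ OutSet φ {x | 0 < MvPolynomial.eval x p}) := by
  show Xor _ _ ∧ Xor _ _
  rw [xor_mem_inSet_mem_outSet_iff, xor_mem_inSet_mem_outSet_iff]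
  simp only [mem_inSet_iff, mem_outSet_iff, mem_ofPred_eq, not_le, not_lt]
  rcases (hφ.isPolyIntegralCurve x₀).eventually_sign_trichotomy p with h | h | h
  · exact ⟨.inl (h.mono fun _ => le_of_lt), .inl h⟩
  · exact ⟨.inl (h.mono fun _ ht => ht.ge), .inr (h.mono fun _ ht => ht.le)⟩
  · exact ⟨.inr h, .inr (h.mono fun _ => le_of_lt)⟩
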